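/- arXiv:1809.10844 — 2 statements merged into one kernel-verified Lean document; each statement's English description precedes it below -/
import Mathlib

section
/- Let Γ be an N×N matrix with all entries strictly positive, ξ, ρ ∈ ℝ^N_{>0}, and r ∈ (0,1). Then the iteration z ↦ (ξ ⊘ (Γᵀ(ρ ⊘ (Γ z))))^r on ℝ^N_{>0} is strictly contractive in the Thompson metric and admits a unique fixed point z* ∈ ℝ^N_{>0}. -/
noncomputable def dT {n : ℕ} (z w : Fin n → ℝ) : ℝ :=
  Real.log (max (⨆ i, z i / w i) (⨆ i, w i / z i))

/-- The fixed-point iteration `z ↦ (ξ ⊘ (Γᵀ (ρ ⊘ (Γ z))))^r`. -/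
noncomputable def iterMap {N : ℕ} (Γ : Matrix (Fin N) (Fin N) ℝ)
    (ξ ρ : Fin N → ℝ) (r : ℝ) (z : Fin N → ℝ) : Fin N → ℝ :=
  fun i => (ξ i / (Γ.transpose.mulVec (fun j => ρ j / Γ.mulVec z j)) i) ^ r

/-!
In logarithmic coordinates `x = log z` the Thompson metric is the sup-distance on `ℝ^N`. A map `T`
of the positive cone that is monotone and homogeneous of degree `r` becomes `r`-Lipschitz there:
`z ≤ e^c w` gives `T z ≤ T (e^c w) = e^{rc} T w`. The iteration is such a map, since each of its
steps is monotone or antitone and homogeneous of degree `1` or `-1`, followed by the power `r`.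
For `r < 1` Banach's fixed point theorem on the complete space `ℝ^N` then gives the unique
positive fixed point.
-/

open Real Matrix

section Matrix
variable {m n : Type*} [Fintype n]

lemma Matrix.mulVec_pos_of_pos {A : Matrix n n ℝ} (hA : ∀ i j, 0 < A i j) {v : n → ℝ}
    (hv : ∀ j, 0 < v j) (i : n) : 0 < (A *ᵥ v) i :=
  Finset.sum_pos (fun j _ => mul_pos (hA i j) (hv j)) ⟨i, Finset.mem_univ i⟩

lemma Matrix.mulVec_le_mulVec_of_nonneg {A : Matrix m n ℝ} (hA : ∀ i j, 0 ≤ A i j)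
    {v w : n → ℝ} (hvw : v ≤ w) : A *ᵥ v ≤ A *ᵥ w :=
  fun i => Finset.sum_le_sum fun j _ => mul_le_mul_of_nonneg_left (hvw j) (hA i j)

end Matrix

lemma exp_comp_log_comp {ι : Type*} {z : ι → ℝ} (hz : ∀ i, 0 < z i) : exp ∘ log ∘ z = z :=
  funext fun i => exp_log (hz i)

section Homogeneous
variable {ι : Type*}

structure IsHomogeneousMonotone (r : ℝ) (T : (ι → ℝ) → ι → ℝ) : Prop where
  pos : ∀ z, (∀ i, 0 < z i) → ∀ i, 0 < T z i
  mono : ∀ z w, (∀ i, 0 < z i) → z ≤ w → T z ≤ T w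
  smul : ∀ (t : ℝ) z, 0 < t → (∀ i, 0 < z i) → T (t • z) = t ^ r • T z

noncomputable def logConj (T : (ι → ℝ) → ι → ℝ) (x : ι → ℝ) : ι → ℝ :=
  log ∘ T (exp ∘ x)

namespace IsHomogeneousMonotone
variable {r : ℝ} {T : (ι → ℝ) → ι → ℝ} (hT : IsHomogeneousMonotone r T)
include hT

lemma pos_comp_exp (x : ι → ℝ) (i : ι) : 0 < T (exp ∘ x) i :=
  hT.pos _ (fun j => exp_pos (x j)) i

lemma logConj_le_add {x y : ι → ℝ} {c : ℝ} (hxy : ∀ j, x j ≤ y j + c) (i : ι) :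
    logConj T x i ≤ logConj T y i + r * c := by
  have hexp : exp ∘ x ≤ exp c • (exp ∘ y) := fun j => by
    simpa [exp_add, mul_comm] using exp_le_exp.2 (hxy j)
  have hle := hT.mono _ _ (fun j => exp_pos (x j)) hexp i
  rw [hT.smul _ (exp ∘ y) (exp_pos c) (fun j => exp_pos (y j)), Pi.smul_apply, smul_eq_mul,
    ← exp_mul] at hle
  calc logConj T x i ≤ log (exp (c * r) * T (exp ∘ y) i) := log_le_log (hT.pos_comp_exp x i) hle
    _ = logConj T y i + r * c := by
        rw [log_mul (exp_ne_zero _) (hT.pos_comp_exp y i).ne', log_exp, logConj,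
          Function.comp_apply]
        ring

lemma lipschitzWith_logConj [Fintype ι] (hr : 0 ≤ r) : LipschitzWith ⟨r, hr⟩ (logConj T) := by
  refine LipschitzWith.of_dist_le_mul fun x y => (dist_pi_le_iff (by positivity)).2 fun i => ?_
  have hxy j : |x j - y j| ≤ dist x y := by rw [← Real.dist_eq]; exact dist_le_pi_dist x y j
  have hupper := hT.logConj_le_add (x := x) (y := y) (c := dist x y)
    (fun j => by linarith [(abs_le.1 (hxy j)).2]) i
  have hlower := hT.logConj_le_add (x := y) (y := x) (c := dist x y)
    (fun j => by linarith [(abs_le.1 (hxy j)).1]) i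
  change dist _ _ ≤ r * dist x y
  rw [Real.dist_eq, abs_sub_le_iff]
  exact ⟨by linarith, by linarith⟩

end IsHomogeneousMonotone
end Homogeneous

section Thompson
variable {n : ℕ} {z w : Fin n → ℝ}

lemma abs_log_sub_log_le_dT (hz : ∀ i, 0 < z i) (hw : ∀ i, 0 < w i) (i : Fin n) :
    |log (z i) - log (w i)| ≤ dT z w := by
  have hzw : z i / w i ≤ max (⨆ i, z i / w i) (⨆ i, w i / z i) :=
    (le_ciSup (Finite.bddAbove_range fun i => z i / w i) i).trans (le_max_left _ _)
  have hwz : w i / z i ≤ max (⨆ i, z i / w i) (⨆ i, w i / z i) :=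
    (le_ciSup (Finite.bddAbove_range fun i => w i / z i) i).trans (le_max_right _ _)
  rw [abs_sub_le_iff, ← log_div (hz i).ne' (hw i).ne', ← log_div (hw i).ne' (hz i).ne']
  exact ⟨log_le_log (div_pos (hz i) (hw i)) hzw, log_le_log (div_pos (hw i) (hz i)) hwz⟩

lemma dT_nonneg (hz : ∀ i, 0 < z i) (hw : ∀ i, 0 < w i) : 0 ≤ dT z w := by
  rcases isEmpty_or_nonempty (Fin n) with _ | ⟨⟨i⟩⟩
  · simp [dT]
  · exact (abs_nonneg _).trans (abs_log_sub_log_le_dT hz hw i)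

lemma dT_le_of_abs_log_sub_log_le {c : ℝ} (hc : 0 ≤ c) (hz : ∀ i, 0 < z i)
    (hw : ∀ i, 0 < w i) (h : ∀ i, |log (z i) - log (w i)| ≤ c) : dT z w ≤ c := by
  rcases isEmpty_or_nonempty (Fin n) with _ | hne
  · simpa [dT] using hc
  obtain ⟨i₀⟩ := id hne
  have hratio {a b : Fin n → ℝ} (ha : ∀ i, 0 < a i) (hb : ∀ i, 0 < b i)
      (hab : ∀ i, log (a i) - log (b i) ≤ c) : ⨆ i, a i / b i ≤ exp c :=
    ciSup_le fun i => (log_le_iff_le_exp (div_pos (ha i) (hb i))).1 <| by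
      rw [log_div (ha i).ne' (hb i).ne']; exact hab i
  have hmax_pos : 0 < max (⨆ i, z i / w i) (⨆ i, w i / z i) :=
    (div_pos (hz i₀) (hw i₀)).trans_le
      ((le_ciSup (Finite.bddAbove_range fun i => z i / w i) i₀).trans (le_max_left _ _))
  refine (log_le_iff_le_exp hmax_pos).2 (max_le ?_ ?_)
  · exact hratio hz hw fun i => (abs_sub_le_iff.1 (h i)).1
  · exact hratio hw hz fun i => (abs_sub_le_iff.1 (h i)).2

lemma dT_eq_dist_log (hz : ∀ i, 0 < z i) (hw : ∀ i, 0 < w i) :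
    dT z w = dist (log ∘ z) (log ∘ w) :=
  le_antisymm
    (dT_le_of_abs_log_sub_log_le dist_nonneg hz hw fun i => by
      rw [← Real.dist_eq]; exact dist_le_pi_dist (log ∘ z) (log ∘ w) i)
    ((dist_pi_le_iff (dT_nonneg hz hw)).2 fun i => by
      rw [Real.dist_eq]; exact abs_log_sub_log_le_dT hz hw i)

end Thompson

namespace IsHomogeneousMonotone
variable {r : ℝ}

lemma dT_le_mul_dT {n : ℕ} {T : (Fin n → ℝ) → Fin n → ℝ} (hT : IsHomogeneousMonotone r T)
    (hr : 0 ≤ r) {z w : Fin n → ℝ} (hz : ∀ i, 0 < z i) (hw : ∀ i, 0 < w i) :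
    dT (T z) (T w) ≤ r * dT z w := by
  have hlog {u : Fin n → ℝ} (hu : ∀ i, 0 < u i) : log ∘ T u = logConj T (log ∘ u) := by
    rw [logConj, exp_comp_log_comp hu]
  rw [dT_eq_dist_log (hT.pos z hz) (hT.pos w hw), dT_eq_dist_log hz hw, hlog hz, hlog hw]
  exact (hT.lipschitzWith_logConj hr).dist_le_mul _ _

lemma existsUnique_pos_fixedPt {ι : Type*} [Fintype ι] {T : (ι → ℝ) → ι → ℝ}
    (hT : IsHomogeneousMonotone r T) (hr0 : 0 ≤ r) (hr1 : r < 1) :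
    ∃! z : ι → ℝ, (∀ i, 0 < z i) ∧ T z = z := by
  have hF : ContractingWith ⟨r, hr0⟩ (logConj T) := ⟨hr1, hT.lipschitzWith_logConj hr0⟩
  have hfix {z : ι → ℝ} (hz : ∀ i, 0 < z i) :
      T z = z ↔ Function.IsFixedPt (logConj T) (log ∘ z) := by
    rw [Function.IsFixedPt, logConj, exp_comp_log_comp hz]
    refine ⟨fun h => by rw [h], fun h => funext fun i => ?_⟩
    rw [← exp_log (hT.pos z hz i), ← exp_log (hz i)]
    exact congrArg exp (congrFun h i)
  set x := ContractingWith.fixedPoint _ hF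
  have hlog_exp : log ∘ exp ∘ x = x := funext fun i => log_exp (x i)
  refine ⟨exp ∘ x, ⟨fun i => exp_pos (x i), ?_⟩, fun z ⟨hz, hTz⟩ => ?_⟩
  · rw [hfix (z := exp ∘ x) fun i => exp_pos (x i), hlog_exp]
    exact hF.fixedPoint_isFixedPt
  · rw [← exp_comp_log_comp hz, hF.fixedPoint_unique ((hfix hz).1 hTz)]

end IsHomogeneousMonotone

section iterMap
variable {N : ℕ} {Γ : Matrix (Fin N) (Fin N) ℝ} {ξ ρ : Fin N → ℝ} {r : ℝ}

lemma iterMap_denom_pos (hΓ : ∀ i j, 0 < Γ i j) (hρ : ∀ i, 0 < ρ i) {z : Fin N → ℝ}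
    (hz : ∀ i, 0 < z i) (i : Fin N) : 0 < (Γᵀ *ᵥ fun j => ρ j / (Γ *ᵥ z) j) i :=
  Matrix.mulVec_pos_of_pos (fun i j => hΓ j i)
    (fun j => div_pos (hρ j) (Matrix.mulVec_pos_of_pos hΓ hz j)) i

lemma iterMap_mono (hΓ : ∀ i j, 0 < Γ i j) (hξ : ∀ i, 0 < ξ i) (hρ : ∀ i, 0 < ρ i)
    (hr : 0 ≤ r) {z w : Fin N → ℝ} (hz : ∀ i, 0 < z i) (hzw : z ≤ w) :
    iterMap Γ ξ ρ r z ≤ iterMap Γ ξ ρ r w := by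
  have hw : ∀ i, 0 < w i := fun i => (hz i).trans_le (hzw i)
  have hΓzw : Γ *ᵥ z ≤ Γ *ᵥ w := Matrix.mulVec_le_mulVec_of_nonneg (fun i j => (hΓ i j).le) hzw
  have hdenom : (Γᵀ *ᵥ fun j => ρ j / (Γ *ᵥ w) j) ≤ Γᵀ *ᵥ fun j => ρ j / (Γ *ᵥ z) j :=
    Matrix.mulVec_le_mulVec_of_nonneg (fun i j => (hΓ j i).le) fun j =>
      div_le_div_of_nonneg_left (hρ j).le (Matrix.mulVec_pos_of_pos hΓ hz j) (hΓzw j)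
  intro i
  exact rpow_le_rpow (div_pos (hξ i) (iterMap_denom_pos hΓ hρ hz i)).le
    (div_le_div_of_nonneg_left (hξ i).le (iterMap_denom_pos hΓ hρ hw i) (hdenom i)) hr

lemma iterMap_smul (hΓ : ∀ i j, 0 < Γ i j) (hξ : ∀ i, 0 < ξ i) (hρ : ∀ i, 0 < ρ i)
    {t : ℝ} (ht : 0 < t) {z : Fin N → ℝ} (hz : ∀ i, 0 < z i) :
    iterMap Γ ξ ρ r (t • z) = t ^ r • iterMap Γ ξ ρ r z := by
  have hinner : (fun j => ρ j / (Γ *ᵥ (t • z)) j) = t⁻¹ • fun j => ρ j / (Γ *ᵥ z) j := by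
    funext j
    simp only [Matrix.mulVec_smul, Pi.smul_apply, smul_eq_mul]
    field_simp
  funext i
  simp only [iterMap, Pi.smul_apply, smul_eq_mul]
  rw [hinner, Matrix.mulVec_smul, Pi.smul_apply, smul_eq_mul,
    ← mul_rpow ht.le (div_pos (hξ i) (iterMap_denom_pos hΓ hρ hz i)).le]
  congr 1
  field_simp

lemma isHomogeneousMonotone_iterMap (hΓ : ∀ i j, 0 < Γ i j) (hξ : ∀ i, 0 < ξ i)
    (hρ : ∀ i, 0 < ρ i) (hr : 0 ≤ r) : IsHomogeneousMonotone r (iterMap Γ ξ ρ r) where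
  pos _ hz i := rpow_pos_of_pos (div_pos (hξ i) (iterMap_denom_pos hΓ hρ hz i)) r
  mono _ _ hz hzw := iterMap_mono hΓ hξ hρ hr hz hzw
  smul _ _ ht hz := iterMap_smul hΓ hξ hρ ht hz

end iterMap

theorem stmt_6_general {N : ℕ} (Γ : Matrix (Fin N) (Fin N) ℝ)
    (hΓ : ∀ i j, 0 < Γ i j) (ξ ρ : Fin N → ℝ)
    (hξ : ∀ i, 0 < ξ i) (hρ : ∀ i, 0 < ρ i) (r : ℝ) (hr0 : 0 < r) (hr1 : r < 1) :
    (∀ z w : Fin N → ℝ, (∀ i, 0 < z i) → (∀ i, 0 < w i) →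
      dT (iterMap Γ ξ ρ r z) (iterMap Γ ξ ρ r w) ≤ r * dT z w) ∧
    (∃! zopt : Fin N → ℝ, (∀ i, 0 < zopt i) ∧ iterMap Γ ξ ρ r zopt = zopt) := by
  have hT := isHomogeneousMonotone_iterMap hΓ hξ hρ hr0.le
  exact ⟨fun z w hz hw => hT.dT_le_mul_dT hr0.le hz hw, hT.existsUnique_pos_fixedPt hr0.le hr1⟩

theorem stmt_6 {N : ℕ} (hN : 0 < N) (Γ : Matrix (Fin N) (Fin N) ℝ)
    (hΓ : ∀ i j, 0 < Γ i j) (ξ ρ : Fin N → ℝ)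
    (hξ : ∀ i, 0 < ξ i) (hρ : ∀ i, 0 < ρ i) (r : ℝ) (hr0 : 0 < r) (hr1 : r < 1) :
    (∀ z w : Fin N → ℝ, (∀ i, 0 < z i) → (∀ i, 0 < w i) →
      dT (iterMap Γ ξ ρ r z) (iterMap Γ ξ ρ r w) ≤ r * dT z w) ∧
    (∃! zopt : Fin N → ℝ, (∀ i, 0 < zopt i) ∧ iterMap Γ ξ ρ r zopt = zopt) :=
  stmt_6_general Γ hΓ ξ ρ hξ hρ r hr0 hr1
end

section
/- Let C ∈ ℝ^{N×N} have nonnegative entries, ε > 0, and ϱ₀, ϱ₁ ∈ ℝ^N_{>0} probability vectors. Any minimizer M of ½⟨C, M⟩ + ε⟨M, log M⟩ over the transportation polytope {M ≥ 0, M1 = ϱ₀, Mᵀ1 = ϱ₁} has the Sinkhorn form M(i,j) = u(i)·exp(−C(i,j)/(2ε))·v(j) for some positive vectors u, v ∈ ℝ^N_{>0}. -/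
open Finset

/-- The entropic-regularized transport objective `½⟨C,M⟩ + ε⟨M, log M⟩`. -/
noncomputable def entObj {N : ℕ} (C : Matrix (Fin N) (Fin N) ℝ) (ε : ℝ)
    (M : Matrix (Fin N) (Fin N) ℝ) : ℝ :=
  (1 / 2) * (∑ i, ∑ j, C i j * M i j) + ε * ∑ i, ∑ j, M i j * Real.log (M i j)

/-- The transportation polytope with marginals `ϱ₀` (rows) and `ϱ₁` (columns). -/
def feasible {N : ℕ} (ϱ₀ ϱ₁ : Fin N → ℝ) (M : Matrix (Fin N) (Fin N) ℝ) : Prop :=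
  (∀ i j, 0 ≤ M i j) ∧ (∀ i, ∑ j, M i j = ϱ₀ i) ∧ (∀ j, ∑ i, M i j = ϱ₁ j)

/-!
A minimiser has no zero entry: moving a zero entry of `M` towards the product coupling
`P = ϱ₀ ϱ₁ᵀ / ∑ ϱ₀` by a step `t` changes the objective by at most
`t (entObj P - entObj M + ε P i j log t)`, which is negative for small `t` because `x log x` has
slope `-∞` at `0`. Once `M` is positive, the objective is differentiable at `M` along every
direction with zero row and column sums, and the rectangle directions `(eᵢ - eₖ)(eⱼ - eₗ)ᵀ` show
that `F = log M + C / (2ε)` has vanishing mixed differences. Hence `F i j = a i + b j`, i.e.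
`M i j = exp (a i) * exp (-C i j / (2ε)) * exp (b j)`.
-/

open Real Filter Topology

lemma exists_eq_add_of_add_eq_add {ι κ G : Type*} [AddCommGroup G] (F : ι → κ → G)
    (hF : ∀ i j k l, F i j + F k l = F i l + F k j) :
    ∃ (a : ι → G) (b : κ → G), ∀ i j, F i j = a i + b j := by
  rcases isEmpty_or_nonempty (ι × κ) with h | ⟨⟨k, l⟩⟩
  · exact ⟨0, 0, fun i j => (IsEmpty.false (i, j)).elim⟩
  · refine ⟨fun i => F i l - F k l, fun j => F k j, fun i j => ?_⟩
    rw [sub_add_eq_add_sub, ← hF, add_sub_cancel_right]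

lemma sum_single_sub_single_mul {ι R : Type*} [Fintype ι] [DecidableEq ι] [Ring R] (i k : ι)
    (g : ι → R) : ∑ a, (Pi.single i 1 - Pi.single k 1 : ι → R) a * g a = g i - g k := by
  simp [sub_mul, Finset.sum_sub_distrib, Pi.single_apply]

section Objective

variable {N : ℕ} (C : Matrix (Fin N) (Fin N) ℝ) (ε : ℝ)

lemma entObj_eq_sum (M : Matrix (Fin N) (Fin N) ℝ) :
    entObj C ε M = ∑ i, ∑ j, (C i j / 2 * M i j + ε * (M i j * log (M i j))) := by
  simp only [entObj, Finset.mul_sum, ← Finset.sum_add_distrib]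
  exact sum_congr rfl fun i _ => sum_congr rfl fun j _ => by ring

lemma hasDerivAt_entObj_add_smul {M : Matrix (Fin N) (Fin N) ℝ} (hM : ∀ i j, 0 < M i j)
    (D : Matrix (Fin N) (Fin N) ℝ) :
    HasDerivAt (fun t : ℝ => entObj C ε (M + t • D))
      (∑ i, ∑ j, (C i j / 2 + ε * (log (M i j) + 1)) * D i j) 0 := by
  simp only [entObj_eq_sum, Matrix.add_apply, Matrix.smul_apply, smul_eq_mul]
  refine HasDerivAt.fun_sum fun i _ => HasDerivAt.fun_sum fun j _ => ?_
  have hline : HasDerivAt (fun t : ℝ => M i j + t * D i j) (D i j) 0 := by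
    simpa using ((hasDerivAt_id (0 : ℝ)).mul_const (D i j)).const_add (M i j)
  have hent := (hasDerivAt_mul_log (by simpa using (hM i j).ne')).comp 0 hline
  simp only [Function.comp_def, zero_mul, add_zero] at hent
  exact ((hline.const_mul (C i j / 2)).fun_add (hent.const_mul ε)).congr_deriv (by ring)

lemma entObj_lineMap_le_of_eq_zero (hε : 0 ≤ ε) {M P : Matrix (Fin N) (Fin N) ℝ}
    (hM : ∀ i j, 0 ≤ M i j) (hP : ∀ i j, 0 ≤ P i j) {t : ℝ} (ht₀ : 0 < t) (ht₁ : t ≤ 1)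
    {i j : Fin N} (hMij : M i j = 0) :
    entObj C ε ((1 - t) • M + t • P) ≤
      (1 - t) * entObj C ε M + t * entObj C ε P + ε * (t * P i j * log t) := by
  have hentry : ∀ a b, C a b / 2 * ((1 - t) * M a b + t * P a b)
      + ε * (((1 - t) * M a b + t * P a b) * log ((1 - t) * M a b + t * P a b)) ≤
      (1 - t) * (C a b / 2 * M a b + ε * (M a b * log (M a b)))
        + t * (C a b / 2 * P a b + ε * (P a b * log (P a b)))
        + if a = i then if b = j then ε * (t * P i j * log t) else 0 else 0 := by
    intro a b
    by_cases hab : a = i ∧ b = j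
    · obtain ⟨rfl, rfl⟩ := hab
      have hsplit := negMulLog_mul t (P a b)
      simp only [negMulLog] at hsplit
      simp only [hMij, if_pos, mul_zero, zero_mul, zero_add, add_zero]
      linear_combination (-ε) * hsplit
    · have hconv := convexOn_mul_log.2 (Set.mem_Ici.2 (hM a b)) (Set.mem_Ici.2 (hP a b))
        (sub_nonneg.2 ht₁) ht₀.le (sub_add_cancel 1 t)
      simp only [smul_eq_mul] at hconv
      have hite : (if a = i then if b = j then ε * (t * P i j * log t) else 0 else 0) = 0 := by
        simp only [not_and_or] at hab
        rcases hab with h | h <;> simp [h]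
      rw [hite]
      nlinarith [mul_le_mul_of_nonneg_left hconv hε]
  simp only [entObj_eq_sum, Matrix.add_apply, Matrix.smul_apply, smul_eq_mul, Finset.mul_sum,
    ← Finset.sum_add_distrib]
  refine (sum_le_sum fun a _ => sum_le_sum fun b _ => hentry a b).trans_eq ?_
  simp [Finset.sum_add_distrib]

end Objective

section Feasible

variable {N : ℕ} {ϱ₀ ϱ₁ : Fin N → ℝ} {M : Matrix (Fin N) (Fin N) ℝ}

lemma feasible.sum_marginal_eq (hM : feasible ϱ₀ ϱ₁ M) : ∑ i, ϱ₀ i = ∑ j, ϱ₁ j := by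
  simp only [← hM.2.1, ← hM.2.2]
  exact Finset.sum_comm

lemma feasible.outer_div (hM : feasible ϱ₀ ϱ₁ M) (hϱ₀ : ∀ i, 0 ≤ ϱ₀ i) (hϱ₁ : ∀ j, 0 ≤ ϱ₁ j)
    (hmass : ∑ k, ϱ₀ k ≠ 0) :
    feasible ϱ₀ ϱ₁ (fun i j => ϱ₀ i * ϱ₁ j / ∑ k, ϱ₀ k) := by
  refine ⟨fun i j => div_nonneg (mul_nonneg (hϱ₀ i) (hϱ₁ j)) (sum_nonneg fun k _ => hϱ₀ k),
    fun i => ?_, fun j => ?_⟩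
  · rw [← Finset.sum_div, ← Finset.mul_sum, ← hM.sum_marginal_eq, mul_div_cancel_right₀ _ hmass]
  · rw [← Finset.sum_div, ← Finset.sum_mul, mul_div_cancel_left₀ _ hmass]

lemma feasible.add (hM : feasible ϱ₀ ϱ₁ M) {D : Matrix (Fin N) (Fin N) ℝ}
    (hrow : ∀ i, ∑ j, D i j = 0) (hcol : ∀ j, ∑ i, D i j = 0)
    (hnonneg : ∀ i j, 0 ≤ M i j + D i j) : feasible ϱ₀ ϱ₁ (M + D) :=
  ⟨hnonneg, fun i => by simp [Finset.sum_add_distrib, hM.2.1, hrow],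
    fun j => by simp [Finset.sum_add_distrib, hM.2.2, hcol]⟩

lemma feasible.lineMap (hM : feasible ϱ₀ ϱ₁ M) {P : Matrix (Fin N) (Fin N) ℝ}
    (hP : feasible ϱ₀ ϱ₁ P) {t : ℝ} (ht₀ : 0 ≤ t) (ht₁ : t ≤ 1) :
    feasible ϱ₀ ϱ₁ ((1 - t) • M + t • P) := by
  refine ⟨fun i j => ?_, fun i => ?_, fun j => ?_⟩
  · simp only [Matrix.add_apply, Matrix.smul_apply, smul_eq_mul]
    exact add_nonneg (mul_nonneg (sub_nonneg.2 ht₁) (hM.1 i j)) (mul_nonneg ht₀ (hP.1 i j))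
  · simp [Finset.sum_add_distrib, ← Finset.mul_sum, hM.2.1, hP.2.1, ← add_mul]
  · simp [Finset.sum_add_distrib, ← Finset.mul_sum, hM.2.2, hP.2.2, ← add_mul]

end Feasible

section Minimizer

variable {N : ℕ} {C : Matrix (Fin N) (Fin N) ℝ} {ε : ℝ} {ϱ₀ ϱ₁ : Fin N → ℝ}
  {M : Matrix (Fin N) (Fin N) ℝ}

lemma pos_of_isMinOn_entObj (hε : 0 < ε) (hϱ₀ : ∀ i, 0 < ϱ₀ i) (hϱ₁ : ∀ j, 0 < ϱ₁ j)
    (hM : feasible ϱ₀ ϱ₁ M) (hmin : IsMinOn (entObj C ε) {M' | feasible ϱ₀ ϱ₁ M'} M)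
    (i j : Fin N) : 0 < M i j := by
  refine (hM.1 i j).lt_of_ne' fun hMij => ?_
  have hmass : 0 < ∑ k, ϱ₀ k := sum_pos (fun k _ => hϱ₀ k) ⟨i, mem_univ i⟩
  set P : Matrix (Fin N) (Fin N) ℝ := fun a b => ϱ₀ a * ϱ₁ b / ∑ k, ϱ₀ k
  have hP : feasible ϱ₀ ϱ₁ P :=
    hM.outer_div (fun k => (hϱ₀ k).le) (fun k => (hϱ₁ k).le) hmass.ne'
  have hPij : 0 < ε * P i j := mul_pos hε (div_pos (mul_pos (hϱ₀ i) (hϱ₁ j)) hmass)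
  obtain ⟨t, ⟨ht₀, ht₁⟩, hgain⟩ : ∃ t ∈ Set.Ioc (0 : ℝ) 1,
      ε * P i j * log t < entObj C ε M - entObj C ε P :=
    (Eventually.and (Ioc_mem_nhdsGT one_pos)
      ((tendsto_log_nhdsGT_zero.const_mul_atBot hPij).eventually (eventually_lt_atBot _))).exists
  have hopt := isMinOn_iff.1 hmin _ (hM.lineMap hP ht₀.le ht₁)
  have hconv := entObj_lineMap_le_of_eq_zero C ε hε.le hM.1 hP.1 ht₀ ht₁ hMij
  linarith [mul_pos ht₀ (sub_pos.2 hgain)]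

lemma sum_mul_eq_zero_of_isMinOn_entObj (hM : feasible ϱ₀ ϱ₁ M) (hpos : ∀ i j, 0 < M i j)
    (hmin : IsMinOn (entObj C ε) {M' | feasible ϱ₀ ϱ₁ M'} M) {D : Matrix (Fin N) (Fin N) ℝ}
    (hrow : ∀ i, ∑ j, D i j = 0) (hcol : ∀ j, ∑ i, D i j = 0) :
    ∑ i, ∑ j, (C i j / 2 + ε * (log (M i j) + 1)) * D i j = 0 := by
  refine IsLocalMin.hasDerivAt_eq_zero ?_ (hasDerivAt_entObj_add_smul C ε hpos D)
  have hnear : ∀ᶠ t in 𝓝 (0 : ℝ), ∀ i j, 0 ≤ M i j + t * D i j := by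
    simp only [eventually_all]
    intro i j
    have hcont : Continuous fun t : ℝ => M i j + t * D i j := by fun_prop
    exact (hcont.tendsto' 0 _ (by simp)).eventually (le_mem_nhds (hpos i j))
  filter_upwards [hnear] with t ht
  have hfeas := hM.add (D := t • D) (by simp [← Finset.mul_sum, hrow])
    (by simp [← Finset.mul_sum, hcol]) (by simpa using ht)
  simpa using isMinOn_iff.1 hmin _ hfeas

lemma log_add_div_add_eq_of_isMinOn_entObj (hε : 0 < ε) (hM : feasible ϱ₀ ϱ₁ M)
    (hpos : ∀ i j, 0 < M i j) (hmin : IsMinOn (entObj C ε) {M' | feasible ϱ₀ ϱ₁ M'} M)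
    (i j k l : Fin N) :
    log (M i j) + C i j / (2 * ε) + (log (M k l) + C k l / (2 * ε)) =
      log (M i l) + C i l / (2 * ε) + (log (M k j) + C k j / (2 * ε)) := by
  set r : Fin N → ℝ := Pi.single i 1 - Pi.single k 1
  set c : Fin N → ℝ := Pi.single j 1 - Pi.single l 1
  set w : Fin N → Fin N → ℝ := fun a b => C a b / 2 + ε * (log (M a b) + 1)
  have hstat := sum_mul_eq_zero_of_isMinOn_entObj hM hpos hmin (D := Matrix.vecMulVec r c)
    (fun a => by simp [Matrix.vecMulVec_apply, ← Finset.mul_sum, c])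
    (fun b => by simp [Matrix.vecMulVec_apply, ← Finset.sum_mul, r])
  have hsum : ∑ a, ∑ b, w a b * Matrix.vecMulVec r c a b = w i j - w i l - (w k j - w k l) := by
    simp only [Matrix.vecMulVec_apply, mul_left_comm _ (r _), ← Finset.mul_sum]
    simp only [mul_comm _ (c _), r, c, sum_single_sub_single_mul]
  rw [hsum] at hstat
  simp only [w] at hstat
  field_simp
  linear_combination 2 * hstat

end Minimizer

theorem stmt_15_general {N : ℕ} (C : Matrix (Fin N) (Fin N) ℝ)
    (ε : ℝ) (hε : 0 < ε) (ϱ₀ ϱ₁ : Fin N → ℝ)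
    (hϱ₀ : ∀ i, 0 < ϱ₀ i) (hϱ₁ : ∀ i, 0 < ϱ₁ i)
    (M : Matrix (Fin N) (Fin N) ℝ) (hMfeas : feasible ϱ₀ ϱ₁ M)
    (hMopt : ∀ M' : Matrix (Fin N) (Fin N) ℝ, feasible ϱ₀ ϱ₁ M' →
      entObj C ε M ≤ entObj C ε M') :
    ∃ u v : Fin N → ℝ, (∀ i, 0 < u i) ∧ (∀ j, 0 < v j) ∧
      ∀ i j, M i j = u i * Real.exp (-C i j / (2 * ε)) * v j := by
  have hmin : IsMinOn (entObj C ε) {M' | feasible ϱ₀ ϱ₁ M'} M := isMinOn_iff.2 hMopt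
  have hpos := pos_of_isMinOn_entObj hε hϱ₀ hϱ₁ hMfeas hmin
  obtain ⟨a, b, hab⟩ := exists_eq_add_of_add_eq_add (fun i j => log (M i j) + C i j / (2 * ε))
    (log_add_div_add_eq_of_isMinOn_entObj hε hMfeas hpos hmin)
  refine ⟨fun i => exp (a i), fun j => exp (b j), fun i => exp_pos _, fun j => exp_pos _,
    fun i j => ?_⟩
  rw [← exp_log (hpos i j), ← exp_add, ← exp_add, neg_div]
  congr 1
  linarith [hab i j]

theorem stmt_15 {N : ℕ} (C : Matrix (Fin N) (Fin N) ℝ) (hC : ∀ i j, 0 ≤ C i j)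
    (ε : ℝ) (hε : 0 < ε) (ϱ₀ ϱ₁ : Fin N → ℝ)
    (hϱ₀ : ∀ i, 0 < ϱ₀ i) (hϱ₁ : ∀ i, 0 < ϱ₁ i)
    (hsum₀ : ∑ i, ϱ₀ i = 1) (hsum₁ : ∑ i, ϱ₁ i = 1)
    (M : Matrix (Fin N) (Fin N) ℝ) (hMfeas : feasible ϱ₀ ϱ₁ M)
    (hMopt : ∀ M' : Matrix (Fin N) (Fin N) ℝ, feasible ϱ₀ ϱ₁ M' →
      entObj C ε M ≤ entObj C ε M') :
    ∃ u v : Fin N → ℝ, (∀ i, 0 < u i) ∧ (∀ j, 0 < v j) ∧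
      ∀ i j, M i j = u i * Real.exp (-C i j / (2 * ε)) * v j :=
  stmt_15_general C ε hε ϱ₀ ϱ₁ hϱ₀ hϱ₁ M hMfeas hMopt
end
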